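/- The Lebesgue measure in ℝ⁴ of the set { (a, b₁, b₂, b₃) : b₁ ≤ 0, b₂ ≤ a, b₃ ≤ a, b₂ + b₃ ≥ a, and 3a − (b₁ + b₂ + b₃) ≤ 1 } equals 1/96. -/

import Mathlib

/-!
The substitution `(x, y, z, w) = (b₂ + b₃ - a, -b₁, 2 (a - b₂), 2 (a - b₃))`, of determinant `-4`,
carries the chamber onto the corner simplex `{x, y, z, w ≥ 0, x + y + z + w ≤ 1}`, whose volume is
`1/4!`; hence the chamber has volume `(1/4) (1/24) = 1/96`. The volume `tⁿ/n!` of the corner simplex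
follows by slicing along the first coordinate: `∫₀ᵗ (t - x)ⁿ⁻¹/(n-1)! dx = tⁿ/n!`.
-/

open MeasureTheory Set

open scoped Nat

def cornerSimplex (n : ℕ) (t : ℝ) : Set (Fin n → ℝ) :=
  {x | (∀ i, 0 ≤ x i) ∧ ∑ i, x i ≤ t}

theorem isClosed_cornerSimplex (n : ℕ) (t : ℝ) : IsClosed (cornerSimplex n t) := by
  simp only [cornerSimplex, ofPred_and, ofPred_forall]
  exact (isClosed_iInter fun i => isClosed_le continuous_const (continuous_apply i)).inter
    (isClosed_le (continuous_finsetSum _ fun i _ => continuous_apply i) continuous_const)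

theorem cornerSimplex_eq_empty {n : ℕ} {t : ℝ} (ht : t < 0) : cornerSimplex n t = ∅ :=
  eq_empty_of_forall_notMem fun _ ⟨hx, hsum⟩ =>
    (Finset.sum_nonneg fun i _ => hx i).not_gt (hsum.trans_lt ht)

theorem cons_mem_cornerSimplex_iff {n : ℕ} {t x₀ : ℝ} {y : Fin n → ℝ} :
    (Fin.cons x₀ y : Fin (n + 1) → ℝ) ∈ cornerSimplex (n + 1) t ↔
      0 ≤ x₀ ∧ y ∈ cornerSimplex n (t - x₀) := by
  simp only [cornerSimplex, mem_ofPred_eq, Fin.forall_fin_succ, Fin.sum_univ_succ, Fin.cons_zero,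
    Fin.cons_succ, and_assoc, le_sub_iff_add_le']

theorem measurePreserving_finCons {α : Type*} [MeasureSpace α] [SigmaFinite (volume : Measure α)]
    (n : ℕ) :
    MeasurePreserving (fun p : α × (Fin n → α) => (Fin.cons p.1 p.2 : Fin (n + 1) → α)) := by
  convert (volume_preserving_piFinSuccAbove (fun _ : Fin (n + 1) => α) 0).symm using 1
  ext p : 1
  simp [MeasurableEquiv.piFinSuccAbove_symm_apply, Fin.consEquiv]

theorem integral_Icc_sub_pow_div_factorial (n : ℕ) {t : ℝ} (ht : 0 ≤ t) :
    ∫ x in Icc 0 t, (t - x) ^ n / n ! = t ^ (n + 1) / (n + 1)! := by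
  rw [integral_Icc_eq_integral_Ioc, ← intervalIntegral.integral_of_le ht,
    intervalIntegral.integral_div, intervalIntegral.integral_comp_sub_left fun x => x ^ n,
    integral_pow, Nat.factorial_succ]
  push_cast
  field_simp
  ring

theorem volume_cornerSimplex (n : ℕ) {t : ℝ} (ht : 0 ≤ t) :
    volume (cornerSimplex n t) = ENNReal.ofReal (t ^ n / n !) := by
  induction n generalizing t with
  | zero =>
    have : cornerSimplex 0 t = univ := eq_univ_of_forall fun x => ⟨finZeroElim, by simpa⟩
    simp [this, volume_pi]
  | succ n ih =>
    have hslice : ∀ x₀, volume {y | (Fin.cons x₀ y : Fin (n + 1) → ℝ) ∈ cornerSimplex (n + 1) t} =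
        (Icc 0 t).indicator (fun x₀ => ENNReal.ofReal ((t - x₀) ^ n / n !)) x₀ := by
      intro x₀
      simp only [cons_mem_cornerSimplex_iff]
      by_cases h₀ : 0 ≤ x₀
      · by_cases ht₀ : x₀ ≤ t
        · simp [h₀, ht₀, ih (sub_nonneg.2 ht₀)]
        · simp [h₀, ht₀, cornerSimplex_eq_empty (sub_neg.2 (not_le.1 ht₀))]
      · simp [h₀]
    have hint : IntegrableOn (fun x₀ => (t - x₀) ^ n / n !) (Icc 0 t) :=
      (by fun_prop : Continuous fun x₀ : ℝ => (t - x₀) ^ n / n !).integrableOn_Icc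
    have hnonneg : 0 ≤ᵐ[volume.restrict (Icc 0 t)] fun x₀ => (t - x₀) ^ n / n ! :=
      (ae_restrict_iff' measurableSet_Icc).2 <| ae_of_all _ fun x₀ hx₀ => by
        have := sub_nonneg.2 hx₀.2
        positivity
    calc volume (cornerSimplex (n + 1) t)
        = volume ((fun p : ℝ × (Fin n → ℝ) => (Fin.cons p.1 p.2 : Fin (n + 1) → ℝ)) ⁻¹'
            cornerSimplex (n + 1) t) :=
          ((measurePreserving_finCons n).measure_preimage
            (isClosed_cornerSimplex _ _).measurableSet.nullMeasurableSet).symm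
      _ = ∫⁻ x₀ in Icc 0 t, ENNReal.ofReal ((t - x₀) ^ n / n !) := by
          rw [Measure.volume_eq_prod, Measure.prod_apply
            ((isClosed_cornerSimplex _ _).measurableSet.preimage
              (measurePreserving_finCons n).measurable),
            ← lintegral_indicator measurableSet_Icc]
          exact lintegral_congr hslice
      _ = ENNReal.ofReal (t ^ (n + 1) / (n + 1)!) := by
          rw [← ofReal_integral_eq_lintegral_ofReal hint hnonneg,
            integral_Icc_sub_pow_div_factorial n ht]

theorem measurePreserving_vecCons_four {α : Type*} [MeasureSpace α]
    [SigmaFinite (volume : Measure α)] :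
    MeasurePreserving fun p : α × α × α × α => ![p.1, p.2.1, p.2.2.1, p.2.2.2] := by
  have h2 := (volume_preserving_finTwoArrow α).symm
  have h3 := (measurePreserving_finCons (α := α) 2).comp (MeasurePreserving.id volume |>.prod h2)
  have h4 := (measurePreserving_finCons (α := α) 3).comp (MeasurePreserving.id volume |>.prod h3)
  convert h4 using 1
  · ext p i
    fin_cases i <;> rfl
  · rfl

def chamberCoords : (Fin 4 → ℝ) →ₗ[ℝ] Fin 4 → ℝ :=
  Matrix.toLin' !![-1, 0, 1, 1; 0, -1, 0, 0; 2, 0, -2, 0; 2, 0, 0, -2]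

theorem det_chamberCoords : LinearMap.det chamberCoords = -4 := by
  rw [chamberCoords, LinearMap.det_toLin']
  simp [Matrix.det_succ_row_zero, Fin.sum_univ_succ, Fin.succAbove]
  norm_num

theorem chamberCoords_apply (x : Fin 4 → ℝ) :
    chamberCoords x = ![x 2 + x 3 - x 0, -x 1, 2 * (x 0 - x 2), 2 * (x 0 - x 3)] := by
  ext i
  fin_cases i <;> simp [chamberCoords, Matrix.mulVec, dotProduct, Fin.sum_univ_four] <;> ring

theorem vecCons_mem_preimage_chamberCoords_iff (a b₁ b₂ b₃ : ℝ) :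
    ![a, b₁, b₂, b₃] ∈ chamberCoords ⁻¹' cornerSimplex 4 1 ↔
      b₁ ≤ 0 ∧ b₂ ≤ a ∧ b₃ ≤ a ∧ a ≤ b₂ + b₃ ∧ 3 * a - (b₁ + b₂ + b₃) ≤ 1 := by
  simp only [mem_preimage, cornerSimplex, mem_ofPred_eq, chamberCoords_apply,
    Fin.forall_fin_succ, Fin.sum_univ_four, Fin.succ_zero_eq_one, Fin.succ_one_eq_two,
    Fin.reduceSucc, Matrix.cons_val, IsEmpty.forall_iff, and_true]
  constructor
  · rintro ⟨⟨h₁, h₂, h₃, h₄⟩, h₅⟩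
    exact ⟨by linarith, by linarith, by linarith, by linarith, by linarith⟩
  · rintro ⟨h₁, h₂, h₃, h₄, h₅⟩
    exact ⟨⟨by linarith, by linarith, by linarith, by linarith⟩, by linarith⟩

/-- The Zariski chamber on `S₃` supported on the maximal negative definite system
`{E₁, L − E₂ − E₃}`: the Lebesgue measure in `ℝ⁴` of
`{(a, b₁, b₂, b₃) : b₁ ≤ 0, b₂ ≤ a, b₃ ≤ a, b₂ + b₃ ≥ a, 3a − (b₁+b₂+b₃) ≤ 1}`
equals `1/96`. -/
theorem chamber_volume_S3_maximal :
    volume {p : ℝ × ℝ × ℝ × ℝ |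
        p.2.1 ≤ 0 ∧ p.2.2.1 ≤ p.1 ∧ p.2.2.2 ≤ p.1 ∧ p.1 ≤ p.2.2.1 + p.2.2.2 ∧
        3 * p.1 - (p.2.1 + p.2.2.1 + p.2.2.2) ≤ 1} =
      ENNReal.ofReal (1 / 96) := by
  have hS : MeasurableSet (chamberCoords ⁻¹' cornerSimplex 4 1) :=
    (isClosed_cornerSimplex 4 1).measurableSet.preimage
      chamberCoords.continuous_of_finiteDimensional.measurable
  calc volume _
      = volume ((fun p : ℝ × ℝ × ℝ × ℝ => ![p.1, p.2.1, p.2.2.1, p.2.2.2]) ⁻¹'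
          (chamberCoords ⁻¹' cornerSimplex 4 1)) := by
        congr 1
        ext ⟨a, b₁, b₂, b₃⟩
        exact (vecCons_mem_preimage_chamberCoords_iff a b₁ b₂ b₃).symm
    _ = volume (chamberCoords ⁻¹' cornerSimplex 4 1) :=
        measurePreserving_vecCons_four.measure_preimage hS.nullMeasurableSet
    _ = ENNReal.ofReal (1 / 96) := by
        rw [Measure.addHaar_preimage_linearMap _ (by norm_num [det_chamberCoords]),
          det_chamberCoords, volume_cornerSimplex 4 zero_le_one,
          ← ENNReal.ofReal_mul (abs_nonneg _)]
        norm_num [Nat.factorial]
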